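/- Let H = {g ∈ G : g([x]) = [x]} be the stabilizer in G of the first level of the tree (equivalently, of the vertex x). Then H equals the subgroup of G generated by a², b and a⁻¹ba; moreover every g ∈ H has its sections g_x and g_y in G, and each of the two section homomorphisms g ↦ g_x and g ↦ g_y maps H onto all of G. -/

import Mathlib

-- The generators `a` and `b` of the iterated monodromy group of `z^2-1`,
-- as functions on binary words (`false` = x = left, `true` = y = right),
-- defined by mutual recursion.
mutual
def aFun : List Bool → List Bool
  | [] => []
  | false :: w => true :: bFun w
  | true :: w => false :: w

def bFun : List Bool → List Bool
  | [] => []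
  | false :: w => false :: aFun w
  | true :: w => true :: w
end

-- The inverses of `aFun`/`bFun`.
mutual
def aInv : List Bool → List Bool
  | [] => []
  | true :: w => false :: bInv w
  | false :: w => true :: w

def bInv : List Bool → List Bool
  | [] => []
  | false :: w => false :: aInv w
  | true :: w => true :: w
end

mutual
theorem aFun_aInv : ∀ w, aFun (aInv w) = w
  | [] => rfl
  | true :: w => by simp [aInv, aFun, bFun_bInv w]
  | false :: w => by simp [aInv, aFun]

theorem bFun_bInv : ∀ w, bFun (bInv w) = w
  | [] => rfl
  | false :: w => by simp [bInv, bFun, aFun_aInv w]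
  | true :: w => by simp [bInv, bFun]
end

mutual
theorem aInv_aFun : ∀ w, aInv (aFun w) = w
  | [] => rfl
  | false :: w => by simp [aFun, aInv, bInv_bFun w]
  | true :: w => by simp [aFun, aInv]

theorem bInv_bFun : ∀ w, bInv (bFun w) = w
  | [] => rfl
  | false :: w => by simp [bFun, bInv, aInv_aFun w]
  | true :: w => by simp [bFun, bInv]
end

/-- `a` as a permutation of the set of binary words. -/
def aPerm : Equiv.Perm (List Bool) := ⟨aFun, aInv, aInv_aFun, aFun_aInv⟩
/-- `b` as a permutation of the set of binary words. -/
def bPerm : Equiv.Perm (List Bool) := ⟨bFun, bInv, bInv_bFun, bFun_bInv⟩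

mutual
theorem aFun_length : ∀ w, (aFun w).length = w.length
  | [] => rfl
  | false :: w => by simp [aFun, bFun_length w]
  | true :: w => by simp [aFun]

theorem bFun_length : ∀ w, (bFun w).length = w.length
  | [] => rfl
  | false :: w => by simp [bFun, aFun_length w]
  | true :: w => by simp [bFun]
end

mutual
theorem aFun_prefix : ∀ u v, u <+: v → aFun u <+: aFun v
  | [], v, _ => by simp [aFun]
  | false :: u, false :: v, h => by
      simp only [List.cons_prefix_cons] at h
      simpa [aFun, List.cons_prefix_cons] using bFun_prefix u v h.2
  | true :: u, true :: v, h => by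
      simp only [List.cons_prefix_cons] at h
      simpa [aFun, List.cons_prefix_cons] using h.2
  | false :: u, true :: v, h => by simp [List.cons_prefix_cons] at h
  | true :: u, false :: v, h => by simp [List.cons_prefix_cons] at h
  | _ :: u, [], h => by simp at h

theorem bFun_prefix : ∀ u v, u <+: v → bFun u <+: bFun v
  | [], v, _ => by simp [bFun]
  | false :: u, false :: v, h => by
      simp only [List.cons_prefix_cons] at h
      simpa [bFun, List.cons_prefix_cons] using aFun_prefix u v h.2
  | true :: u, true :: v, h => by
      simp only [List.cons_prefix_cons] at h
      simpa [bFun, List.cons_prefix_cons] using h.2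
  | false :: u, true :: v, h => by simp [List.cons_prefix_cons] at h
  | true :: u, false :: v, h => by simp [List.cons_prefix_cons] at h
  | _ :: u, [], h => by simp at h
end

/-- The group of automorphisms of the binary rooted tree: bijections of the set of
binary words preserving word length and the prefix relation. -/
def treeAut : Subgroup (Equiv.Perm (List Bool)) where
  carrier := {f | (∀ w, (f w).length = w.length) ∧ ∀ u v : List Bool, u <+: v → f u <+: f v}
  one_mem' := ⟨fun _ => rfl, fun _ _ h => h⟩
  mul_mem' := by
    rintro f g ⟨hf1, hf2⟩ ⟨hg1, hg2⟩
    exact ⟨fun w => (hf1 _).trans (hg1 w), fun u v h => hf2 _ _ (hg2 _ _ h)⟩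
  inv_mem' := by
    rintro f ⟨hf1, hf2⟩
    constructor
    · intro w
      have := hf1 (f⁻¹ w)
      simpa using this.symm
    · intro u v h
      have hlen : (f⁻¹ u).length ≤ (f⁻¹ v).length := by
        have h1 : (f⁻¹ u).length = u.length := by have := hf1 (f⁻¹ u); simpa using this.symm
        have h2 : (f⁻¹ v).length = v.length := by have := hf1 (f⁻¹ v); simpa using this.symm
        rw [h1, h2]; exact h.length_le
      set p := (f⁻¹ v).take (f⁻¹ u).length with hp
      have hpv : p <+: f⁻¹ v := List.take_prefix _ _
      have hplen : p.length = (f⁻¹ u).length := by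
        simp [hp, List.length_take]; simpa using hlen
      have hfp : f p <+: v := by
        have := hf2 _ _ hpv
        simpa using this
      have hfplen : (f p).length = u.length := by
        rw [hf1 p, hplen]
        have := hf1 (f⁻¹ u); simpa using this.symm
      have : f p = u := by
        rcases List.prefix_or_prefix_of_prefix hfp h with h' | h'
        · exact h'.eq_of_length hfplen
        · exact (h'.eq_of_length hfplen.symm).symm
      have : p = f⁻¹ u := by
        have := congrArg (f⁻¹ : Equiv.Perm (List Bool)) this
        simpa using this
      rw [← this]; exact hpv

/-- The generator `a` as a tree automorphism. -/
def A : treeAut := ⟨aPerm, aFun_length, aFun_prefix⟩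
/-- The generator `b` as a tree automorphism. -/
def B : treeAut := ⟨bPerm, bFun_length, bFun_prefix⟩

/-- The iterated monodromy group of `z ↦ z² - 1`: the subgroup of the automorphism
group of the binary rooted tree generated by `a` and `b`. -/
def G : Subgroup treeAut := Subgroup.closure {A, B}

/-- Apply a tree automorphism to a binary word. -/
def app (g : treeAut) (w : List Bool) : List Bool := g.val w

/-- The image letter: for `g` a tree automorphism and a letter `i`, the letter `g(i)`
such that `g([i]) = [g(i)]`. -/
def letterImg (g : treeAut) (i : Bool) : Bool := (app g [i]).headI

theorem app_singleton (g : treeAut) (i : Bool) : app g [i] = [letterImg g i] := by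
  have hlen : (app g [i]).length = 1 := g.2.1 [i]
  match h : app g [i] with
  | [j] => simp [letterImg, h]
  | [] => rw [h] at hlen; simp at hlen
  | j :: k :: l => rw [h] at hlen; simp at hlen

theorem app_cons (g : treeAut) (i : Bool) (w : List Bool) :
    app g (i :: w) = letterImg g i :: (app g (i :: w)).tail := by
  have hpre : app g [i] <+: app g (i :: w) := g.2.2 [i] (i :: w) ⟨w, rfl⟩
  rw [app_singleton] at hpre
  obtain ⟨t, ht⟩ := hpre
  rw [← ht]; rfl

theorem appInv_letterImg (g : treeAut) (i : Bool) : app g⁻¹ [letterImg g i] = [i] := by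
  rw [← app_singleton g i]
  show (g.val)⁻¹.toFun (g.val.toFun [i]) = [i]
  simp

theorem letterImg_inv (g : treeAut) (i : Bool) : letterImg g⁻¹ (letterImg g i) = i := by
  show (app g⁻¹ [letterImg g i]).headI = i
  rw [appInv_letterImg]; rfl

/-- The section `g_i` of a tree automorphism `g` at the first-level vertex `i`:
the tree automorphism determined by `g(i·w) = g(i)·(g_i(w))`. -/
def gsec (g : treeAut) (i : Bool) : treeAut := by
  refine ⟨⟨fun w => (app g (i :: w)).tail,
          fun w => (app g⁻¹ (letterImg g i :: w)).tail, ?_, ?_⟩, ?_, ?_⟩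
  · intro w
    have h1 : letterImg g i :: (app g (i :: w)).tail = app g (i :: w) := (app_cons g i w).symm
    simp only [h1]
    have h2 : app g⁻¹ (app g (i :: w)) = i :: w := by
      show (g.val)⁻¹.toFun (g.val.toFun (i :: w)) = i :: w
      simp
    rw [h2]
    rfl
  · intro w
    have h1 := app_cons g⁻¹ (letterImg g i) w
    rw [letterImg_inv] at h1
    simp only [← h1]
    have h2 : app g (app g⁻¹ (letterImg g i :: w)) = letterImg g i :: w := by
      show g.val.toFun ((g.val)⁻¹.toFun (letterImg g i :: w)) = letterImg g i :: w
      simp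
    rw [h2]
    rfl
  · intro w
    show ((app g (i :: w)).tail).length = w.length
    have hl : (app g (i :: w)).length = (i :: w).length := g.2.1 (i :: w)
    rw [List.length_tail, hl]
    rfl
  · intro u v h
    show (app g (i :: u)).tail <+: (app g (i :: v)).tail
    have h2 : app g (i :: u) <+: app g (i :: v) := g.2.2 _ _ (by
      simpa [List.cons_prefix_cons] using h)
    rw [app_cons g i u, app_cons g i v, List.cons_prefix_cons] at h2
    exact h2.2


/-! ### Auxiliary material -/

lemma A_mem_G : A ∈ G := Subgroup.subset_closure (by simp)
lemma B_mem_G : B ∈ G := Subgroup.subset_closure (by simp)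

lemma app_mul (g h : treeAut) (w : List Bool) : app (g * h) w = app g (app h w) := rfl

/-- The stabilizer of `[false]` as a subgroup. -/
def St : Subgroup treeAut where
  carrier := {g | app g [false] = [false]}
  one_mem' := rfl
  mul_mem' := by
    intro f g hf hg
    show app (f * g) [false] = [false]
    rw [app_mul, hg, hf]
  inv_mem' := by
    intro f hf
    show app f⁻¹ [false] = [false]
    have := congrArg f.val.symm hf
    rw [show app f [false] = f.val [false] from rfl, Equiv.symm_apply_apply] at this
    exact this.symm

lemma mem_St {g : treeAut} : g ∈ St ↔ app g [false] = [false] := Iff.rfl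

/-- The subgroup generated by `a²`, `b`, `a⁻¹ba`. -/
abbrev Kgrp : Subgroup treeAut := Subgroup.closure {A ^ 2, B, A⁻¹ * B * A}

lemma genA2 : A ^ 2 ∈ Kgrp := Subgroup.subset_closure (by simp)
lemma genB : B ∈ Kgrp := Subgroup.subset_closure (by simp)
lemma genC : A⁻¹ * B * A ∈ Kgrp := Subgroup.subset_closure (by simp)

lemma K_le_G : Kgrp ≤ G := by
  rw [Subgroup.closure_le]
  rintro g (rfl | rfl | rfl)
  · exact pow_mem A_mem_G 2
  · exact B_mem_G
  · exact mul_mem (mul_mem (inv_mem A_mem_G) B_mem_G) A_mem_G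

lemma K_le_St : Kgrp ≤ St := by
  rw [Subgroup.closure_le]
  rintro g (rfl | rfl | rfl)
  · exact (rfl : app (A ^ 2) [false] = [false])
  · exact (rfl : app B [false] = [false])
  · exact (rfl : app (A⁻¹ * B * A) [false] = [false])

lemma conjA {k : treeAut} (hk : k ∈ Kgrp) : A⁻¹ * k * A ∈ Kgrp := by
  induction hk using Subgroup.closure_induction with
  | mem x hx =>
    rcases hx with rfl | rfl | rfl
    · have h : A⁻¹ * A ^ 2 * A = A ^ 2 := by (try simp only [pow_two]); group
      rw [h]; exact genA2
    · exact genC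
    · have h : A⁻¹ * (A⁻¹ * B * A) * A = (A ^ 2)⁻¹ * B * A ^ 2 := by (try simp only [pow_two]); group
      rw [h]; exact mul_mem (mul_mem (inv_mem genA2) genB) genA2
  | one =>
    have h : A⁻¹ * 1 * A = 1 := by (try simp only [pow_two]); group
    rw [h]; exact one_mem _
  | mul x y hx hy ihx ihy =>
    have h : A⁻¹ * (x * y) * A = (A⁻¹ * x * A) * (A⁻¹ * y * A) := by (try simp only [pow_two]); group
    rw [h]; exact mul_mem ihx ihy
  | inv x hx ihx =>
    have h : A⁻¹ * x⁻¹ * A = (A⁻¹ * x * A)⁻¹ := by (try simp only [pow_two]); group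
    rw [h]; exact inv_mem ihx

lemma conjA' {k : treeAut} (hk : k ∈ Kgrp) : A * k * A⁻¹ ∈ Kgrp := by
  induction hk using Subgroup.closure_induction with
  | mem x hx =>
    rcases hx with rfl | rfl | rfl
    · have h : A * A ^ 2 * A⁻¹ = A ^ 2 := by (try simp only [pow_two]); group
      rw [h]; exact genA2
    · have h : A * B * A⁻¹ = A ^ 2 * (A⁻¹ * B * A) * (A ^ 2)⁻¹ := by (try simp only [pow_two]); group
      rw [h]; exact mul_mem (mul_mem genA2 genC) (inv_mem genA2)
    · have h : A * (A⁻¹ * B * A) * A⁻¹ = B := by (try simp only [pow_two]); group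
      rw [h]; exact genB
  | one =>
    have h : A * 1 * A⁻¹ = 1 := by (try simp only [pow_two]); group
    rw [h]; exact one_mem _
  | mul x y hx hy ihx ihy =>
    have h : A * (x * y) * A⁻¹ = (A * x * A⁻¹) * (A * y * A⁻¹) := by (try simp only [pow_two]); group
    rw [h]; exact mul_mem ihx ihy
  | inv x hx ihx =>
    have h : A * x⁻¹ * A⁻¹ = (A * x * A⁻¹)⁻¹ := by (try simp only [pow_two]); group
    rw [h]; exact inv_mem ihx

lemma coset_of_G {g : treeAut} (hg : g ∈ G) : g ∈ Kgrp ∨ A⁻¹ * g ∈ Kgrp := by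
  induction hg using Subgroup.closure_induction with
  | mem x hx =>
    rcases hx with rfl | rfl
    · right
      have h : A⁻¹ * A = 1 := by (try simp only [pow_two]); group
      rw [h]; exact one_mem _
    · left; exact genB
  | one => left; exact one_mem _
  | mul x y hx hy ihx ihy =>
    rcases ihx with ihx | ihx <;> rcases ihy with ihy | ihy
    · left; exact mul_mem ihx ihy
    · right
      have h : A⁻¹ * (x * y) = (A⁻¹ * x * A) * (A⁻¹ * y) := by (try simp only [pow_two]); group
      rw [h]; exact mul_mem (conjA ihx) ihy
    · right
      have h : A⁻¹ * (x * y) = (A⁻¹ * x) * y := by (try simp only [pow_two]); group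
      rw [h]; exact mul_mem ihx ihy
    · left
      have h : x * y = A ^ 2 * (A⁻¹ * (A⁻¹ * x) * A) * (A⁻¹ * y) := by (try simp only [pow_two]); group
      rw [h]; exact mul_mem (mul_mem genA2 (conjA ihx)) ihy
  | inv x hx ihx =>
    rcases ihx with ihx | ihx
    · left; exact inv_mem ihx
    · right
      have h : A⁻¹ * x⁻¹ = (A ^ 2)⁻¹ * (A * (A⁻¹ * x)⁻¹ * A⁻¹) := by (try simp only [pow_two]); group
      rw [h]; exact mul_mem (inv_mem genA2) (conjA' (inv_mem ihx))

lemma letterImg_false_of_fix {g : treeAut} (h : app g [false] = [false]) :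
    letterImg g false = false := by simp [letterImg, h]

lemma app_true_of_fix {g : treeAut} (h : app g [false] = [false]) :
    app g [true] = [true] := by
  rw [app_singleton]
  cases hj : letterImg g true with
  | true => rfl
  | false =>
    exfalso
    have h1 : app g [true] = [false] := by rw [app_singleton, hj]
    have := g.val.injective (h1.trans h.symm)
    simp at this

lemma letterImg_of_fix {g : treeAut} (h : app g [false] = [false]) (i : Bool) :
    letterImg g i = i := by
  cases i
  · exact letterImg_false_of_fix h
  · simp [letterImg, app_true_of_fix h]

lemma app_fix_cons {g : treeAut} (hg : app g [false] = [false]) (i : Bool) (w : List Bool) :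
    app g (i :: w) = i :: (gsec g i).val w := by
  have h := app_cons g i w
  rw [letterImg_of_fix hg] at h
  exact h

lemma gsec_mul' (g : treeAut) {h : treeAut} (hh : app h [false] = [false]) (i : Bool) :
    gsec (g * h) i = gsec g i * gsec h i := by
  apply Subtype.ext; apply Equiv.ext; intro w
  show (app (g * h) (i :: w)).tail = (gsec g i).val ((gsec h i).val w)
  rw [app_mul, app_fix_cons hh]
  rfl

lemma gsec_one (i : Bool) : gsec 1 i = 1 := Subtype.ext (Equiv.ext fun _ => rfl)

lemma gsec_inv {g : treeAut} (hg : app g [false] = [false]) (i : Bool) :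
    gsec g⁻¹ i = (gsec g i)⁻¹ := by
  have h1 : app g⁻¹ [false] = [false] := mem_St.mp (inv_mem (mem_St.mpr hg))
  have h2 : gsec g i * gsec g⁻¹ i = 1 := by
    rw [← gsec_mul' g h1 i, mul_inv_cancel, gsec_one]
  exact (inv_eq_of_mul_eq_one_right h2).symm

lemma gsec_B_false : gsec B false = A := Subtype.ext (Equiv.ext fun _ => rfl)
lemma gsec_B_true : gsec B true = 1 := Subtype.ext (Equiv.ext fun _ => rfl)
lemma gsec_A2 (i : Bool) : gsec (A ^ 2) i = B := by
  cases i <;> exact Subtype.ext (Equiv.ext fun _ => rfl)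
lemma gsec_C_false : gsec (A⁻¹ * B * A) false = 1 :=
  Subtype.ext (Equiv.ext fun w => bInv_bFun w)
lemma gsec_C_true : gsec (A⁻¹ * B * A) true = A := Subtype.ext (Equiv.ext fun _ => rfl)
/-- the stabilizer `H = {g ∈ G : g([x]) = [x]}` of the first level equals
the subgroup generated by `a²`, `b` and `a⁻¹ba`; every `g ∈ H` has both sections in `G`;
the section maps are homomorphisms on `H` and map `H` onto all of `G`. -/
theorem level_one_stabilizer :
    (∀ g : treeAut,
        (g ∈ G ∧ app g [false] = [false]) ↔ g ∈ Subgroup.closure {A ^ 2, B, A⁻¹ * B * A}) ∧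
    (∀ g : treeAut, g ∈ G → app g [false] = [false] →
        gsec g false ∈ G ∧ gsec g true ∈ G) ∧
    (∀ g h : treeAut, g ∈ G → app g [false] = [false] → h ∈ G → app h [false] = [false] →
        ∀ i : Bool, gsec (g * h) i = gsec g i * gsec h i) ∧
    (∀ i : Bool, ∀ k : treeAut, k ∈ G →
        ∃ g : treeAut, g ∈ G ∧ app g [false] = [false] ∧ gsec g i = k) := by
  have secG : ∀ g : treeAut, g ∈ Kgrp → gsec g false ∈ G ∧ gsec g true ∈ G := by
    intro g hg
    induction hg using Subgroup.closure_induction with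
    | mem x hx =>
      rcases hx with rfl | rfl | rfl
      · rw [gsec_A2, gsec_A2]; exact ⟨B_mem_G, B_mem_G⟩
      · rw [gsec_B_false, gsec_B_true]; exact ⟨A_mem_G, one_mem _⟩
      · rw [gsec_C_false, gsec_C_true]; exact ⟨one_mem _, A_mem_G⟩
    | one => rw [gsec_one, gsec_one]; exact ⟨one_mem _, one_mem _⟩
    | mul x y hx hy ihx ihy =>
      rw [gsec_mul' x (K_le_St hy), gsec_mul' x (K_le_St hy)]
      exact ⟨mul_mem ihx.1 ihy.1, mul_mem ihx.2 ihy.2⟩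
    | inv x hx ihx =>
      rw [gsec_inv (K_le_St hx), gsec_inv (K_le_St hx)]
      exact ⟨inv_mem ihx.1, inv_mem ihx.2⟩
  have part1 : ∀ g : treeAut, (g ∈ G ∧ app g [false] = [false]) ↔ g ∈ Kgrp := by
    intro g
    constructor
    · rintro ⟨hg, hfix⟩
      rcases coset_of_G hg with h | h
      · exact h
      · exfalso
        have h1 : app (A⁻¹ * g) [false] = [false] := K_le_St h
        rw [app_mul, hfix, show app A⁻¹ [false] = [true] from rfl] at h1
        simp at h1
    · intro h; exact ⟨K_le_G h, K_le_St h⟩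
  refine ⟨part1, ?_, ?_, ?_⟩
  · intro g hg hfix
    exact secG g ((part1 g).mp ⟨hg, hfix⟩)
  · intro g h _ _ _ hh i
    exact gsec_mul' g hh i
  · intro i k hk
    induction hk using Subgroup.closure_induction with
    | mem x hx =>
      rcases hx with rfl | rfl
      · cases i
        · exact ⟨B, B_mem_G, rfl, gsec_B_false⟩
        · exact ⟨A⁻¹ * B * A, K_le_G genC, rfl, gsec_C_true⟩
      · exact ⟨A ^ 2, K_le_G genA2, rfl, gsec_A2 i⟩
    | one => exact ⟨1, one_mem _, rfl, gsec_one i⟩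
    | mul x y hx hy ihx ihy =>
      obtain ⟨g1, hg1, hf1, hs1⟩ := ihx
      obtain ⟨g2, hg2, hf2, hs2⟩ := ihy
      refine ⟨g1 * g2, mul_mem hg1 hg2, ?_, ?_⟩
      · rw [app_mul, hf2, hf1]
      · rw [gsec_mul' g1 hf2, hs1, hs2]
    | inv x hx ihx =>
      obtain ⟨g1, hg1, hf1, hs1⟩ := ihx
      exact ⟨g1⁻¹, inv_mem hg1, mem_St.mp (inv_mem (mem_St.mpr hf1)),
        by rw [gsec_inv hf1, hs1]⟩
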